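/- arXiv:1310.1874 — 2 statements merged into one kernel-verified Lean document; each statement's English description precedes it below -/
import Mathlib

section
/- Let X ⊆ ℝ^n be a nonempty closed convex set, let w, x ∈ ℝ^n, and let φ < 0 and M > 0 be constants such that ‖x − P_X(w)‖^2 ≤ M and ⟨w − P_X(w), x − P_X(w)⟩ ≤ φ. Then for every natural number t with t > −M/(2φ), the point z = (t/(t+1))·w + (1/(t+1))·x satisfies dist(z, X) < ‖w − P_X(w)‖ whenever w ∉ X; more precisely, dist(z, X)^2 − dist(w, X)^2 ≤ (M + 2tφ)/(t+1)^2 < 0. -/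
open RealInnerProductSpace

/-!
With `u = w - p` and `v = x - p`, the averaged point satisfies `(t + 1) • (z - p) = t • u + v`, so
`(t + 1)² ‖z - p‖² = t² ‖u‖² + 2t ⟪u, v⟫ + ‖v‖² ≤ t² ‖u‖² + 2tφ + M ≤ (t + 1)² ‖u‖² + (M + 2tφ)`.
Since `p ∈ X` and `p` is a nearest point of `X` to `w`, this bounds `dist(z, X)² - dist(w, X)²`,
and the choice of `t` makes `M + 2tφ` negative.
-/

lemma Metric.infDist_eq_dist_of_forall_dist_le {α : Type*} [PseudoMetricSpace α] {s : Set α}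
    {w p : α} (hp : p ∈ s) (hmin : ∀ y ∈ s, dist w p ≤ dist w y) :
    Metric.infDist w s = dist w p :=
  le_antisymm (Metric.infDist_le_dist_of_mem hp) ((Metric.le_infDist ⟨p, hp⟩).2 hmin)

section Averaging

variable {E : Type*} [NormedAddCommGroup E] [InnerProductSpace ℝ E]

lemma add_one_smul_average_sub {t : ℝ} (ht : 0 ≤ t) (w x p : E) :
    (t + 1) • ((t / (t + 1)) • w + (1 / (t + 1)) • x - p) = t • (w - p) + (x - p) := by
  have ht1 : t + 1 ≠ 0 := by positivity
  rw [smul_sub, smul_add, smul_smul, smul_smul, mul_div_cancel₀ _ ht1, mul_div_cancel₀ _ ht1,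
    one_smul, smul_sub, add_smul, one_smul]
  abel

lemma norm_smul_add_sq_le {t φ M : ℝ} (ht : 0 ≤ t) {u v : E} (huv : ⟪u, v⟫ ≤ φ)
    (hv : ‖v‖ ^ 2 ≤ M) :
    ‖t • u + v‖ ^ 2 ≤ t ^ 2 * ‖u‖ ^ 2 + 2 * t * φ + M := by
  rw [norm_add_sq_real, norm_smul, real_inner_smul_left, Real.norm_of_nonneg ht]
  nlinarith

lemma norm_average_sub_sq_sub_le {t φ M : ℝ} (ht : 0 ≤ t) {w x p : E}
    (happ : ⟪w - p, x - p⟫ ≤ φ) (hx : ‖x - p‖ ^ 2 ≤ M) :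
    ‖(t / (t + 1)) • w + (1 / (t + 1)) • x - p‖ ^ 2 - ‖w - p‖ ^ 2
      ≤ (M + 2 * t * φ) / (t + 1) ^ 2 := by
  have hscaled : (t + 1) ^ 2 * ‖(t / (t + 1)) • w + (1 / (t + 1)) • x - p‖ ^ 2
      ≤ t ^ 2 * ‖w - p‖ ^ 2 + 2 * t * φ + M := by
    calc (t + 1) ^ 2 * ‖(t / (t + 1)) • w + (1 / (t + 1)) • x - p‖ ^ 2
        = ‖t • (w - p) + (x - p)‖ ^ 2 := by
          rw [← add_one_smul_average_sub ht, norm_smul, Real.norm_of_nonneg (by positivity),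
            mul_pow]
      _ ≤ t ^ 2 * ‖w - p‖ ^ 2 + 2 * t * φ + M := norm_smul_add_sq_le ht happ hx
  rw [le_div_iff₀ (by positivity)]
  nlinarith [sq_nonneg ‖w - p‖]

end Averaging

theorem approachability_step_decrease_general
    (n : ℕ) (X : Set (EuclideanSpace ℝ (Fin n)))
    (w x p : EuclideanSpace ℝ (Fin n))
    (hpX : p ∈ X) (hp_proj : ∀ y ∈ X, ‖w - p‖ ≤ ‖w - y‖)
    (φ M : ℝ) (hφ : φ < 0)
    (hx_bound : ‖x - p‖^2 ≤ M)
    (happ : ⟪w - p, x - p⟫ ≤ φ)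
    (t : ℕ) (ht : (t : ℝ) > -M/(2*φ)) :
    (w ∉ X → Metric.infDist (((t : ℝ)/(t+1)) • w + ((1 : ℝ)/(t+1)) • x) X
        < ‖w - p‖) ∧
    Metric.infDist (((t : ℝ)/(t+1)) • w + ((1 : ℝ)/(t+1)) • x) X ^ 2
        - Metric.infDist w X ^ 2 ≤ (M + 2*(t : ℝ)*φ)/((t : ℝ)+1)^2 ∧
    (M + 2*(t : ℝ)*φ)/((t : ℝ)+1)^2 < 0 := by
  set z := ((t : ℝ) / (t + 1)) • w + ((1 : ℝ) / (t + 1)) • x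
  have hw : Metric.infDist w X = ‖w - p‖ := by
    simpa only [dist_eq_norm] using
      Metric.infDist_eq_dist_of_forall_dist_le hpX (by simpa only [dist_eq_norm] using hp_proj)
  have hz : Metric.infDist z X ≤ ‖z - p‖ := by
    simpa only [dist_eq_norm] using Metric.infDist_le_dist_of_mem (x := z) hpX
  have hneg : (M + 2 * (t : ℝ) * φ) / ((t : ℝ) + 1) ^ 2 < 0 := by
    have : M + 2 * (t : ℝ) * φ < 0 := by
      rw [gt_iff_lt, div_lt_iff_of_neg (by linarith)] at ht
      linarith
    exact div_neg_of_neg_of_pos this (by positivity)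
  have hdecrease : Metric.infDist z X ^ 2 - Metric.infDist w X ^ 2
      ≤ (M + 2 * (t : ℝ) * φ) / ((t : ℝ) + 1) ^ 2 := by
    rw [hw]
    have := norm_average_sub_sq_sub_le (Nat.cast_nonneg t) happ hx_bound
    nlinarith [Metric.infDist_nonneg (x := z) (s := X)]
  refine ⟨fun _ => ?_, hdecrease, hneg⟩
  rw [← hw]
  exact lt_of_pow_lt_pow_left₀ 2 Metric.infDist_nonneg (by linarith)

/-- under the Blackwell approachability condition the
time-averaging step strictly decreases the distance to `X` for `t` large. -/
theorem approachability_step_decrease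
    (n : ℕ) (X : Set (EuclideanSpace ℝ (Fin n)))
    (hXne : X.Nonempty) (hXcl : IsClosed X) (hXconv : Convex ℝ X)
    (w x p : EuclideanSpace ℝ (Fin n))
    (hpX : p ∈ X) (hp_proj : ∀ y ∈ X, ‖w - p‖ ≤ ‖w - y‖)
    (φ M : ℝ) (hφ : φ < 0) (hM : 0 < M)
    (hx_bound : ‖x - p‖^2 ≤ M)
    (happ : ⟪w - p, x - p⟫ ≤ φ)
    (t : ℕ) (ht : (t : ℝ) > -M/(2*φ)) :
    (w ∉ X → Metric.infDist (((t : ℝ)/(t+1)) • w + ((1 : ℝ)/(t+1)) • x) X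
        < ‖w - p‖) ∧
    Metric.infDist (((t : ℝ)/(t+1)) • w + ((1 : ℝ)/(t+1)) • x) X ^ 2
        - Metric.infDist w X ^ 2 ≤ (M + 2*(t : ℝ)*φ)/((t : ℝ)+1)^2 ∧
    (M + 2*(t : ℝ)*φ)/((t : ℝ)+1)^2 < 0 :=
  approachability_step_decrease_general n X w x p hpX hp_proj φ M hφ hx_bound happ t ht
end

section
/- Let X ⊆ ℝ^n be a nonempty closed convex bounded set. Suppose (x̂_i(t))_{i=1,…,n; t∈ℕ} evolve as x̂_i(t+1) = (t/(t+1))·w_i(t) + (1/(t+1))·x_i(t+1) with w_i(t) = Σ_j a^i_j(t) x̂_j(t), where each A(t) is doubly stochastic, the inputs satisfy ‖x_i(t+1) − P_X(w_i(t))‖ ≤ √M for some M > 0, and the approachability condition ⟨w_i(t) − P_X(w_i(t)), x_i(t+1) − P_X(w_i(t))⟩ ≤ 0 holds for all i, t. Then Σ_{i=1}^n τ^2 · dist(x̂_i(τ), X)^2 ≤ M·n·τ for all τ ≥ 1, and consequently lim_{τ→∞} Σ_{i=1}^n dist(x̂_i(τ), X) = 0. -/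
open RealInnerProductSpace Filter

/-- approachability theorem.  Under double stochasticity,
boundedness of increments and the approachability condition, the summed
squared distances satisfy `∑ i τ² dist² ≤ M n τ` and the total distance
to `X` vanishes asymptotically. -/
theorem approachability_theorem
    (n : ℕ) (X : Set (EuclideanSpace ℝ (Fin n)))
    (hXne : X.Nonempty) (hXcl : IsClosed X) (hXconv : Convex ℝ X)
    (hXbdd : Bornology.IsBounded X)
    (P : EuclideanSpace ℝ (Fin n) → EuclideanSpace ℝ (Fin n))
    (hP_mem : ∀ z, P z ∈ X)
    (hP_proj : ∀ z, ∀ y ∈ X, ‖z - P z‖ ≤ ‖z - y‖)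
    (A : ℕ → Fin n → Fin n → ℝ)
    (hA_nonneg : ∀ t i j, 0 ≤ A t i j)
    (hA_rows : ∀ t i, ∑ j, A t i j = 1)
    (hA_cols : ∀ t j, ∑ i, A t i j = 1)
    (xhat x w : Fin n → ℕ → EuclideanSpace ℝ (Fin n))
    (hw : ∀ i t, w i t = ∑ j, A t i j • xhat j t)
    (hdyn : ∀ i t, xhat i (t+1)
        = ((t : ℝ)/(t+1)) • w i t + ((1 : ℝ)/(t+1)) • x i (t+1))
    (M : ℝ) (hM : 0 < M)
    (hbound : ∀ i t, ‖x i (t+1) - P (w i t)‖ ≤ Real.sqrt M)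
    (happ : ∀ i t, ⟪w i t - P (w i t), x i (t+1) - P (w i t)⟫ ≤ 0) :
    (∀ τ : ℕ, 1 ≤ τ →
        ∑ i, (τ : ℝ)^2 * Metric.infDist (xhat i τ) X ^ 2 ≤ M * n * τ) ∧
    Tendsto (fun τ : ℕ => ∑ i, Metric.infDist (xhat i τ) X) atTop (nhds 0) := by
  classical
  set d : Fin n → ℕ → ℝ := fun i t => Metric.infDist (xhat i t) X with hd
  have hdnonneg : ∀ i t, 0 ≤ d i t := fun i t => Metric.infDist_nonneg
  -- P z realizes the infimum distance
  have hPnorm : ∀ z, ‖z - P z‖ = Metric.infDist z X := by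
    intro z
    apply le_antisymm
    · by_contra h
      push_neg at h
      obtain ⟨y, hy, hlt⟩ := (Metric.infDist_lt_iff hXne).1 h
      rw [dist_eq_norm] at hlt
      exact absurd (hP_proj z y hy) (not_le.2 hlt)
    · calc Metric.infDist z X ≤ dist z (P z) := Metric.infDist_le_dist_of_mem (hP_mem z)
        _ = ‖z - P z‖ := dist_eq_norm _ _
  -- per-player, per-step inequality
  have stepB : ∀ (i : Fin n) (t : ℕ),
      ((t:ℝ)+1)^2 * d i (t+1)^2
        ≤ (t:ℝ)^2 * (Metric.infDist (w i t) X)^2 + M := by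
    intro i t
    set u := w i t - P (w i t) with hu
    set v := x i (t+1) - P (w i t) with hv
    have ht : ((t:ℝ)+1) ≠ 0 := by positivity
    have key : ((t:ℝ)+1) • (xhat i (t+1) - P (w i t)) = (t:ℝ) • u + v := by
      rw [hdyn i t, hu, hv]
      rw [smul_sub, smul_add, smul_smul, smul_smul]
      rw [mul_div_cancel₀ _ ht, mul_one_div, div_self ht, one_smul]
      rw [smul_sub]
      have : ((t:ℝ)+1) • P (w i t) = (t:ℝ) • P (w i t) + P (w i t) := by
        rw [add_smul, one_smul]
      rw [this]
      abel
    have hle : d i (t+1) ≤ ‖xhat i (t+1) - P (w i t)‖ := by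
      calc d i (t+1) ≤ dist (xhat i (t+1)) (P (w i t)) :=
            Metric.infDist_le_dist_of_mem (hP_mem _)
        _ = ‖xhat i (t+1) - P (w i t)‖ := dist_eq_norm _ _
    have htnn : (0:ℝ) ≤ (t:ℝ)+1 := by positivity
    have hle2 : ((t:ℝ)+1) * d i (t+1) ≤ ‖(t:ℝ) • u + v‖ := by
      calc ((t:ℝ)+1) * d i (t+1) ≤ ((t:ℝ)+1) * ‖xhat i (t+1) - P (w i t)‖ :=
            mul_le_mul_of_nonneg_left hle htnn
        _ = ‖((t:ℝ)+1) • (xhat i (t+1) - P (w i t))‖ := by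
            rw [norm_smul, Real.norm_eq_abs, abs_of_nonneg htnn]
        _ = ‖(t:ℝ) • u + v‖ := by rw [key]
    have hsq : (((t:ℝ)+1) * d i (t+1))^2 ≤ ‖(t:ℝ) • u + v‖^2 := by
      apply pow_le_pow_left₀ (mul_nonneg htnn (hdnonneg i (t+1))) hle2
    have expand : ‖(t:ℝ) • u + v‖^2
        = (t:ℝ)^2 * ‖u‖^2 + 2*((t:ℝ) * ⟪u, v⟫) + ‖v‖^2 := by
      rw [norm_add_sq_real, norm_smul, real_inner_smul_left, Real.norm_eq_abs,
        abs_of_nonneg (Nat.cast_nonneg t)]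
      ring
    have hinner : (t:ℝ) * ⟪u, v⟫ ≤ 0 :=
      mul_nonpos_of_nonneg_of_nonpos (Nat.cast_nonneg t) (happ i t)
    have hv2 : ‖v‖^2 ≤ M := by
      have := hbound i t
      rw [← hv] at this
      calc ‖v‖^2 ≤ Real.sqrt M ^ 2 := pow_le_pow_left₀ (norm_nonneg _) this 2
        _ = M := Real.sq_sqrt hM.le
    have hunorm : ‖u‖ = Metric.infDist (w i t) X := hPnorm (w i t)
    rw [← hunorm]
    nlinarith [hsq, expand, hinner, hv2]
  -- network averaging does not increase total squared distance
  have stepC : ∀ t : ℕ, ∑ i, (Metric.infDist (w i t) X)^2 ≤ ∑ j, d j t ^2 := by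
    intro t
    have per : ∀ i, (Metric.infDist (w i t) X)^2 ≤ ∑ j, A t i j * d j t ^2 := by
      intro i
      have hy : (∑ j, A t i j • P (xhat j t)) ∈ X :=
        hXconv.sum_mem (fun j _ => hA_nonneg t i j) (hA_rows t i)
          (fun j _ => hP_mem _)
      have h1 : Metric.infDist (w i t) X ≤ ∑ j, A t i j * d j t := by
        calc Metric.infDist (w i t) X
            ≤ dist (w i t) (∑ j, A t i j • P (xhat j t)) :=
              Metric.infDist_le_dist_of_mem hy
          _ = ‖∑ j, A t i j • (xhat j t - P (xhat j t))‖ := by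
              rw [dist_eq_norm, hw, ← Finset.sum_sub_distrib]
              simp_rw [smul_sub]
          _ ≤ ∑ j, ‖A t i j • (xhat j t - P (xhat j t))‖ := norm_sum_le _ _
          _ = ∑ j, A t i j * d j t := by
              refine Finset.sum_congr rfl fun j _ => ?_
              rw [norm_smul, Real.norm_eq_abs, abs_of_nonneg (hA_nonneg t i j),
                hPnorm]
      have h2 : (∑ j, A t i j * d j t)^2 ≤ ∑ j, A t i j * d j t ^2 := by
        have cs := Finset.sum_mul_sq_le_sq_mul_sq Finset.univ
          (fun j => Real.sqrt (A t i j))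
          (fun j => Real.sqrt (A t i j) * d j t)
        have e1 : ∀ j : Fin n, Real.sqrt (A t i j) * (Real.sqrt (A t i j) * d j t)
            = A t i j * d j t := by
          intro j
          rw [← mul_assoc, Real.mul_self_sqrt (hA_nonneg t i j)]
        have e2 : ∀ j : Fin n, Real.sqrt (A t i j) ^ 2 = A t i j := fun j =>
          Real.sq_sqrt (hA_nonneg t i j)
        have e3 : ∀ j : Fin n, (Real.sqrt (A t i j) * d j t)^2
            = A t i j * d j t ^2 := by
          intro j
          rw [mul_pow, Real.sq_sqrt (hA_nonneg t i j)]
        simp_rw [e1, e2, e3, hA_rows t i, one_mul] at cs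
        exact cs
      calc (Metric.infDist (w i t) X)^2 ≤ (∑ j, A t i j * d j t)^2 :=
            pow_le_pow_left₀ Metric.infDist_nonneg h1 2
        _ ≤ ∑ j, A t i j * d j t ^2 := h2
    calc ∑ i, (Metric.infDist (w i t) X)^2
        ≤ ∑ i, ∑ j, A t i j * d j t ^2 := Finset.sum_le_sum fun i _ => per i
      _ = ∑ j, (∑ i, A t i j) * d j t ^2 := by
          rw [Finset.sum_comm]
          simp_rw [Finset.sum_mul]
      _ = ∑ j, d j t ^2 := by simp_rw [hA_cols, one_mul]
  -- main estimate by induction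
  have main : ∀ τ : ℕ, ∑ i, (τ:ℝ)^2 * d i τ ^2 ≤ M * n * τ := by
    intro τ
    induction τ with
    | zero => simp
    | succ t ih =>
      have hsum : ∑ i, ((t:ℝ)+1)^2 * d i (t+1)^2
          ≤ ∑ i, ((t:ℝ)^2 * (Metric.infDist (w i t) X)^2 + M) :=
        Finset.sum_le_sum fun i _ => stepB i t
      have e : ∑ i, ((t:ℝ)^2 * (Metric.infDist (w i t) X)^2 + M)
          = (t:ℝ)^2 * (∑ i, (Metric.infDist (w i t) X)^2) + n * M := by
        rw [Finset.sum_add_distrib, Finset.mul_sum]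
        simp [Finset.sum_const, Finset.card_univ]
      have h3 : (t:ℝ)^2 * (∑ i, (Metric.infDist (w i t) X)^2)
          ≤ (t:ℝ)^2 * ∑ j, d j t ^2 :=
        mul_le_mul_of_nonneg_left (stepC t) (by positivity)
      have h4 : (t:ℝ)^2 * ∑ j, d j t ^2 = ∑ j, (t:ℝ)^2 * d j t ^2 :=
        Finset.mul_sum _ _ _
      push_cast
      calc ∑ i, ((t:ℝ)+1)^2 * d i (t+1)^2
          ≤ (t:ℝ)^2 * (∑ i, (Metric.infDist (w i t) X)^2) + n * M := by
            rw [← e]; exact hsum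
        _ ≤ ∑ j, (t:ℝ)^2 * d j t ^2 + n * M := by rw [← h4]; linarith
        _ ≤ M * n * t + n * M := by linarith
        _ = M * n * ((t:ℝ)+1) := by ring
  refine ⟨fun τ _ => main τ, ?_⟩
  -- squeeze for the limit
  have hbnd : ∀ τ : ℕ, 1 ≤ τ → ∑ i, d i τ ≤ Real.sqrt (M * n^2 / τ) := by
    intro τ hτ
    have hτpos : (0:ℝ) < τ := by exact_mod_cast hτ
    have hsumsq : ∑ i, d i τ ^2 ≤ M * n / τ := by
      rw [le_div_iff₀ hτpos]
      calc (∑ i, d i τ ^2) * (τ:ℝ) = (∑ i, (τ:ℝ) * d i τ ^2) := by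
            rw [Finset.sum_mul]; exact Finset.sum_congr rfl fun i _ => by ring
        _ ≤ M * n := by
            have h5 : ∑ i, (τ:ℝ)^2 * d i τ ^2 ≤ M * n * τ := main τ
            have h6 : (∑ i, (τ:ℝ) * d i τ ^2) * τ ≤ M * n * τ := by
              calc (∑ i, (τ:ℝ) * d i τ ^2) * τ = ∑ i, (τ:ℝ)^2 * d i τ ^2 := by
                    rw [Finset.sum_mul]
                    exact Finset.sum_congr rfl fun i _ => by ring
                _ ≤ M * n * τ := h5
            exact le_of_mul_le_mul_right h6 hτpos
    have hcs : (∑ i, d i τ)^2 ≤ (n:ℝ) * ∑ i, d i τ ^2 := by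
      have := sq_sum_le_card_mul_sum_sq (s := Finset.univ) (f := fun i => d i τ)
      simpa [Finset.card_univ] using this
    have hsq2 : (∑ i, d i τ)^2 ≤ M * n^2 / τ := by
      calc (∑ i, d i τ)^2 ≤ (n:ℝ) * ∑ i, d i τ ^2 := hcs
        _ ≤ (n:ℝ) * (M * n / τ) :=
            mul_le_mul_of_nonneg_left hsumsq (Nat.cast_nonneg n)
        _ = M * n^2 / τ := by ring
    calc ∑ i, d i τ = Real.sqrt ((∑ i, d i τ)^2) :=
          (Real.sqrt_sq (Finset.sum_nonneg fun i _ => hdnonneg i τ)).symm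
      _ ≤ Real.sqrt (M * n^2 / τ) := Real.sqrt_le_sqrt hsq2
  have hlim : Tendsto (fun τ : ℕ => Real.sqrt (M * n^2 / τ)) atTop (nhds 0) := by
    have h0 : Tendsto (fun τ : ℕ => M * n^2 / τ) atTop (nhds 0) :=
      tendsto_const_div_atTop_nhds_zero_nat (M * n^2)
    simpa [Real.sqrt_zero] using h0.sqrt
  apply squeeze_zero' (t₀ := atTop) ?_ ?_ hlim
  · filter_upwards with τ
    exact Finset.sum_nonneg fun i _ => hdnonneg i τ
  · filter_upwards [eventually_ge_atTop 1] with τ hτ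
    exact hbnd τ hτ
end
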